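/- For u, u' ∈ ℂ \ {0,-1} with u' ∉ {u, 1/u}, the matrices ρ_u(T) and ρ_{u'}(T) are not conjugate in GL(4,ℂ); consequently the representations ρ_u and ρ_{u'} are not conjugate. -/

import Mathlib

/-!
The trace is a conjugation invariant, and `tr ρ_u(T) = 2 + u + u⁻¹`. Since `u + u⁻¹` determines
`u` up to `u ↦ u⁻¹`, the parameters `u'` excluded by the hypotheses are exactly those with the
same trace.
-/

noncomputable section

/-- The tautological representation of Bi(3): image of T. -/
def rhoT (u : ℂ) : Matrix (Fin 4) (Fin 4) ℂ :=
  !![1, 0, 0, 0;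
     -(2 - u + u^2)/u^2, 1/u + u, -1, 1/u + u;
     0, 1, 0, 0;
     0, 0, 0, 1]

/-- The tautological representation of Bi(3): image of U. -/
def rhoU (u : ℂ) : Matrix (Fin 4) (Fin 4) ℂ :=
  !![1 + u, 0, 0, -u;
     -2/(u + u^2), 1/(1 + u), 1/(1 + u), -u/(1 + u);
     -(2 + u + u^2)/(u^2 + u^3), -1/(1 + u), (1 + u + u^2)/(u + u^2), 1/(u + u^2);
     1, 0, 0, 0]

/-- The tautological representation of Bi(3): image of A. -/
def rhoA (u : ℂ) : Matrix (Fin 4) (Fin 4) ℂ :=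
  !![1, 0, 0, 0;
     0, 0, 0, 1;
     -(2 - u + u^2)/u^2, 1/u + u, -1, 1/u + u;
     0, 1, 0, 0]

/-- The tautological representation of Bi(3): image of L. -/
def rhoL (u : ℂ) : Matrix (Fin 4) (Fin 4) ℂ :=
  !![(-1 + u)/(1 + u), -u^2/(1 + u), u/(1 + u), -u^2/(1 + u);
     -2/(u + u^2), 1/(1 + u), 1/(1 + u), -u/(1 + u);
     -(2 + u + u^2)/u^2, 1/u, 0, 1/u;
     -2/(u + u^2), -u/(1 + u), 1/(1 + u), 1/(1 + u)]

theorem add_inv_eq_add_inv_iff {K : Type*} [Field K] {x y : K} (hx : x ≠ 0) (hy : y ≠ 0) :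
    x + x⁻¹ = y + y⁻¹ ↔ y = x ∨ y = x⁻¹ := by
  have key : (y - x) * (x * y - 1) = x * y * ((y + y⁻¹) - (x + x⁻¹)) := by
    field_simp
    ring
  constructor
  · intro h
    rw [h, sub_self, mul_zero, mul_eq_zero, sub_eq_zero, sub_eq_zero] at key
    exact key.imp id (eq_inv_of_mul_eq_one_right ·)
  · rintro (rfl | rfl)
    · rfl
    · rw [inv_inv, add_comm]

theorem trace_rhoT (u : ℂ) : (rhoT u).trace = 2 + (u + u⁻¹) := by
  simp only [Matrix.trace, Matrix.diag, Fin.sum_univ_four, rhoT, Matrix.of_apply, Matrix.cons_val',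
    Matrix.cons_val, Matrix.cons_val_fin_one]
  ring

theorem rho_u_not_conjugate_general (u u' : ℂ) (hu0 : u ≠ 0)
    (hu'0 : u' ≠ 0) (hne : u' ≠ u) (hne' : u' ≠ 1/u) :
    (¬ ∃ P : Matrix (Fin 4) (Fin 4) ℂ, IsUnit P ∧ P * rhoT u * P⁻¹ = rhoT u') ∧
    (¬ ∃ P : Matrix (Fin 4) (Fin 4) ℂ, IsUnit P ∧
        P * rhoT u * P⁻¹ = rhoT u' ∧ P * rhoU u * P⁻¹ = rhoU u' ∧
        P * rhoA u * P⁻¹ = rhoA u' ∧ P * rhoL u * P⁻¹ = rhoL u') := by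
  have not_conj_T : ¬ ∃ P : Matrix (Fin 4) (Fin 4) ℂ, IsUnit P ∧ P * rhoT u * P⁻¹ = rhoT u' := by
    rintro ⟨P, hP, hconj⟩
    have htrace : u + u⁻¹ = u' + u'⁻¹ := by
      simpa [Matrix.trace_conj hP, trace_rhoT] using congrArg Matrix.trace hconj
    rcases (add_inv_eq_add_inv_iff hu0 hu'0).1 htrace with h | h
    exacts [hne h, hne' (h.trans (one_div u).symm)]
  exact ⟨not_conj_T, fun ⟨P, hP, hT, _⟩ => not_conj_T ⟨P, hP, hT⟩⟩

/-- for u, u' ∈ ℂ \ {0,-1} with u' ∉ {u, 1/u}, ρ_u(T) and ρ_{u'}(T) are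
not conjugate in GL(4,ℂ); consequently the representations ρ_u and ρ_{u'} are not
conjugate. -/
theorem rho_u_not_conjugate (u u' : ℂ) (hu0 : u ≠ 0) (hu1 : u ≠ -1)
    (hu'0 : u' ≠ 0) (hu'1 : u' ≠ -1) (hne : u' ≠ u) (hne' : u' ≠ 1/u) :
    (¬ ∃ P : Matrix (Fin 4) (Fin 4) ℂ, IsUnit P ∧ P * rhoT u * P⁻¹ = rhoT u') ∧
    (¬ ∃ P : Matrix (Fin 4) (Fin 4) ℂ, IsUnit P ∧
        P * rhoT u * P⁻¹ = rhoT u' ∧ P * rhoU u * P⁻¹ = rhoU u' ∧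
        P * rhoA u * P⁻¹ = rhoA u' ∧ P * rhoL u * P⁻¹ = rhoL u') :=
  rho_u_not_conjugate_general u u' hu0 hu'0 hne hne'

end
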